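/- For integers m, n ≥ 1, let P be a coarsening of the column set of (m+4)P_n with |P| = k ≥ 2. Then every P-flip of (m+4)P_n contains a (k−1)-flipped mP_n as a pivot-minor. -/

import Mathlib

open SimpleGraph

universe u v

/-! ### Basic graph operations: flips, local complementation, pivoting, pivot-minors -/

/-- Flip the adjacency of `G` exactly at the pairs of distinct vertices where the
(symmetrized) predicate `p` holds. -/
def sdFlip {V : Type u} (G : SimpleGraph V) (p : V → V → Prop) : SimpleGraph V where
  Adj x y := x ≠ y ∧ Xor' (G.Adj x y) (p x y ∨ p y x)
  symm := by
    constructor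
    intro x y h
    refine ⟨h.1.symm, ?_⟩
    have h2 := h.2
    rwa [G.adj_comm x y, or_comm] at h2
  loopless := by
    constructor
    intro x h
    exact h.1 rfl

/-- Local complementation `G * v`: complement the adjacency inside the neighborhood of `v`. -/
def localComp {V : Type u} (G : SimpleGraph V) (v : V) : SimpleGraph V :=
  sdFlip G (fun x y => G.Adj v x ∧ G.Adj v y)

/-- Pivoting an edge `uv`: `G ∧ uv = G * u * v * u`. -/
def pivot {V : Type u} (G : SimpleGraph V) (u v : V) : SimpleGraph V :=
  localComp (localComp (localComp G u) v) u

/-- Applying a sequence of pivots. -/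
def pivotSeq {V : Type u} (G : SimpleGraph V) : List (V × V) → SimpleGraph V
  | [] => G
  | e :: l => pivotSeq (pivot G e.1 e.2) l

/-- Each pivot in the sequence is performed on an edge of the current graph. -/
def ValidPivots {V : Type u} (G : SimpleGraph V) : List (V × V) → Prop
  | [] => True
  | e :: l => G.Adj e.1 e.2 ∧ ValidPivots (pivot G e.1 e.2) l

/-- `H` is a pivot-minor of `G`: `H` is isomorphic to a graph obtained from `G` by a sequence of
pivotings (on edges of the current graph) and vertex deletions. -/
def IsPivotMinorOf {W : Type v} {V : Type u} (H : SimpleGraph W) (G : SimpleGraph V) : Prop :=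
  ∃ (l : List (V × V)) (S : Set V), ValidPivots G l ∧
    Nonempty (H ≃g (pivotSeq G l).induce S)

/-! ### The half-graph join `G △ H` -/

/-- `G △ H`: the disjoint union of `G` and `H` together with the half graph joining them:
the `i`-th vertex of `G` is adjacent to the `j`-th vertex of `H` iff `i ≥ j`. -/
def halfJoin {n : ℕ} (G H : SimpleGraph (Fin n)) : SimpleGraph (Fin n ⊕ Fin n) where
  Adj x y :=
    match x, y with
    | Sum.inl i, Sum.inl i' => G.Adj i i'
    | Sum.inr j, Sum.inr j' => H.Adj j j'
    | Sum.inl i, Sum.inr j => j ≤ i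
    | Sum.inr j, Sum.inl i => j ≤ i
  symm := by
    constructor
    rintro (i | i) (j | j) h
    · exact G.adj_symm h
    · exact h
    · exact h
    · exact H.adj_symm h
  loopless := by
    constructor
    rintro (i | i) h
    · exact G.irrefl h
    · exact H.irrefl h

/-! ### Flips by a set, by a pair of sets, and by a collection of sets -/

/-- The `X`-flip of `G`: complement the adjacency inside `X`. (The `∅`-flip is `G` itself.) -/
def setFlip {V : Type u} (G : SimpleGraph V) (X : Set V) : SimpleGraph V :=
  sdFlip G (fun x y => x ∈ X ∧ y ∈ X)

/-- `G * (X, Y)`: complement the adjacency between `X` and `Y`. -/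
def pairFlip {V : Type u} (G : SimpleGraph V) (X Y : Set V) : SimpleGraph V :=
  sdFlip G (fun x y => x ∈ X ∧ y ∈ Y)

open Classical in
/-- The member of the collection `P` containing `v`, if any, and `{v}` otherwise. -/
noncomputable def blockOf {V : Type u} (P : Set (Set V)) (v : V) : Set V :=
  if h : ∃ X ∈ P, v ∈ X then h.choose else {v}

/-- A subset `F ⊆ P²` is symmetric if `(X,X') ∈ F` implies `(X',X) ∈ F`. -/
def SymmRelSet {α : Type u} (F : Set (α × α)) : Prop :=
  ∀ a b : α, (a, b) ∈ F → (b, a) ∈ F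

/-- The `(P,F)`-flip `H ⊕ (P,F)` of `H`: distinct vertices `u,v` are adjacent iff
`H.Adj u v` XOR `(P(u), P(v)) ∈ F`. -/
noncomputable def collFlip {V : Type u} (H : SimpleGraph V) (P : Set (Set V))
    (F : Set (Set V × Set V)) : SimpleGraph V :=
  sdFlip H (fun x y => (blockOf P x, blockOf P y) ∈ F)

/-- `P` is a collection of pairwise disjoint non-empty subsets. -/
def IsDisjNonemptyColl {V : Type u} (P : Set (Set V)) : Prop :=
  (∀ X ∈ P, X.Nonempty) ∧ P.PairwiseDisjoint id

/-- `Q` is a coarsening of `P`: a collection of disjoint non-empty sets,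
each a union of members of `P`. -/
def IsCoarsening {α : Type u} (Q P : Set (Set α)) : Prop :=
  IsDisjNonemptyColl Q ∧ ∀ X ∈ Q, ∃ C ⊆ P, X = ⋃₀ C

/-! ### The graph `mPₙ` and flipped `mPₙ`'s -/

/-- `mPₙ`: the disjoint union of `m` copies of the path `Pₙ`, with vertex set `[m] × [n]`. -/
def pathsGraph (m n : ℕ) : SimpleGraph (Fin m × Fin n) where
  Adj x y := x.1 = y.1 ∧ (pathGraph n).Adj x.2 y.2
  symm := by
    constructor
    rintro ⟨i, a⟩ ⟨j, b⟩ ⟨h1, h2⟩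
    exact ⟨h1.symm, (pathGraph n).adj_symm h2⟩
  loopless := by
    constructor
    rintro ⟨i, a⟩ ⟨_, h⟩
    exact (pathGraph n).irrefl h

/-- The `j`-th column of `mPₙ`. -/
def column (m n : ℕ) (j : Fin n) : Set (Fin m × Fin n) := {p | p.2 = j}

/-- The column set of `mPₙ`. -/
def columnSet (m n : ℕ) : Set (Set (Fin m × Fin n)) := Set.range (column m n)

/-- A flipped `mPₙ`: a `P`-flip of `mPₙ` where `P` is a coarsening of the column set. -/
def IsFlippedPaths (m n : ℕ) (G : SimpleGraph (Fin m × Fin n)) : Prop :=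
  ∃ (P : Set (Set (Fin m × Fin n))) (F : Set (Set (Fin m × Fin n) × Set (Fin m × Fin n))),
    IsCoarsening P (columnSet m n) ∧ F ⊆ P ×ˢ P ∧ SymmRelSet F ∧
    G = collFlip (pathsGraph m n) P F

/-- A `k`-flipped `mPₙ`: a flipped `mPₙ` with `|P| ≤ k`. -/
def IsKFlippedPaths (k m n : ℕ) (G : SimpleGraph (Fin m × Fin n)) : Prop :=
  ∃ (P : Set (Set (Fin m × Fin n))) (F : Set (Set (Fin m × Fin n) × Set (Fin m × Fin n))),
    IsCoarsening P (columnSet m n) ∧ P.ncard ≤ k ∧ F ⊆ P ×ˢ P ∧ SymmRelSet F ∧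
    G = collFlip (pathsGraph m n) P F

/-! ### Cut-rank and rank-depth -/

open Classical in
/-- The cut-rank `ρ_G(S)`: the rank over GF(2) of the `S × (V ∖ S)` submatrix of the
adjacency matrix of `G`. -/
noncomputable def cutRank {V : Type u} [Fintype V] (G : SimpleGraph V) (S : Set V) : ℕ :=
  Matrix.rank (Matrix.of fun (i : S) (j : (Sᶜ : Set V)) =>
    if G.Adj (i : V) (j : V) then (1 : ZMod 2) else 0)

/-- The rank-depth of `G`: the least `k` such that `G` has a decomposition `(T, σ)` into a
tree `T` with the vertices of `G` identified with the leaves of `T` via `σ`, of width at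
most `k` and radius at most `k`.  The width condition is expressed as: for every non-leaf
node `v` of `T` and every set `S ⊆ V(G)` that is a union of parts of the partition of `V(G)`
induced by the components of `T - v`, we have `ρ_G(S) ≤ k`. -/
noncomputable def rankDepth {V : Type u} [Fintype V] (G : SimpleGraph V) : ℕ :=
  sInf {k : ℕ |
    ∃ (N : ℕ) (T : SimpleGraph (Fin N))
      (σ : V ≃ {x : Fin N // (T.neighborSet x).ncard ≤ 1}),
      T.IsTree ∧
      (∃ c : Fin N, ∀ x : Fin N, T.dist c x ≤ k) ∧
      (∀ x : Fin N, 1 < (T.neighborSet x).ncard →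
        ∀ S : Set V,
          (∀ a b : V, a ∈ S →
            (∃ w : T.Walk ((σ a : {x : Fin N // (T.neighborSet x).ncard ≤ 1}) : Fin N)
                ((σ b : {x : Fin N // (T.neighborSet x).ncard ≤ 1}) : Fin N),
              x ∉ w.support) → b ∈ S) →
          cutRank G S ≤ k)}

/-! ### Restrictions of collections, and the sets `C_F`, `L_F`, `R_F`, `D_F` -/

/-- The restriction `P|_{S}` of a collection of subsets of `V` to a subset `S`. -/
def restrictColl {V : Type u} (P : Set (Set V)) (S : Set V) : Set (Set S) :=
  {Y | ∃ X ∈ P, (Subtype.val ⁻¹' X : Set S).Nonempty ∧ Y = (Subtype.val ⁻¹' X : Set S)}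

/-- The restriction `F|_{S}` of a collection of pairs of subsets of `V` to a subset `S`. -/
def restrictF {V : Type u} (F : Set (Set V × Set V)) (S : Set V) : Set (Set S × Set S) :=
  {q | ∃ p ∈ F, (Subtype.val ⁻¹' p.1 : Set S).Nonempty ∧ (Subtype.val ⁻¹' p.2 : Set S).Nonempty ∧
      q = ((Subtype.val ⁻¹' p.1 : Set S), (Subtype.val ⁻¹' p.2 : Set S))}

/-- `C_F(X,X') = {Y ∈ P : (X,Y) ∈ F and (X',Y) ∈ F}`. -/
def CF {V : Type u} (P : Set (Set V)) (F : Set (Set V × Set V)) (X X' : Set V) : Set (Set V) :=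
  {Y ∈ P | (X, Y) ∈ F ∧ (X', Y) ∈ F}

/-- `L_F(X,X') = {Y ∈ P : (X,Y) ∈ F and (X',Y) ∉ F}`. -/
def LF {V : Type u} (P : Set (Set V)) (F : Set (Set V × Set V)) (X X' : Set V) : Set (Set V) :=
  {Y ∈ P | (X, Y) ∈ F ∧ (X', Y) ∉ F}

/-- `R_F(X,X') = {Y ∈ P : (X,Y) ∉ F and (X',Y) ∈ F}`. -/
def RF {V : Type u} (P : Set (Set V)) (F : Set (Set V × Set V)) (X X' : Set V) : Set (Set V) :=
  {Y ∈ P | (X, Y) ∉ F ∧ (X', Y) ∈ F}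

/-- `D_F(X,X') = (C×L) ∪ (C×R) ∪ (L×R) ∪ (L×C) ∪ (R×C) ∪ (R×L)`. -/
def DF {V : Type u} (P : Set (Set V)) (F : Set (Set V × Set V)) (X X' : Set V) :
    Set (Set V × Set V) :=
  (CF P F X X' ×ˢ LF P F X X') ∪ (CF P F X X' ×ˢ RF P F X X') ∪ (LF P F X X' ×ˢ RF P F X X') ∪
  (LF P F X X' ×ˢ CF P F X X') ∪ (RF P F X X' ×ˢ CF P F X X') ∪ (RF P F X X' ×ˢ LF P F X X')

/-- The set of `t` consecutive vertices of the path `P_s` starting at position `i` (0-indexed). -/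
def consec (s i t : ℕ) : Set (Fin s) := {x | i ≤ (x : ℕ) ∧ (x : ℕ) < i + t}

/-- An `(s,t)`-path: a graph isomorphic to the `X`-flip of `P_s` for a set `X` of `t`
consecutive vertices of `P_s`. -/
def IsSTPath (s t : ℕ) {W : Type v} (G : SimpleGraph W) : Prop :=
  ∃ i : ℕ, i + t ≤ s ∧ Nonempty (G ≃g setFlip (pathGraph s) (consec s i t))


/-! A `(P, F)`-flip of `mPₙ` with `P` a coarsening of the columns is the flip of `mPₙ` by a
symmetric relation `f` between columns that is constant on the blocks of `P`. Pivoting an edge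
`uv` whose ends see column `j` through `g j` and `h j` changes `f` into
`f + g ⊗ h + h ⊗ g` over GF(2) on the vertices away from `u` and `v`. The four spare rows
allow pivots after which, on the first `m` rows, the relation vanishes on some block or agrees
on two blocks, so one block can be dropped or two merged. If `f` relates some column `a` to
another but not to itself, a single pivot between two spare rows kills the block of `a`.
Otherwise take covered columns `a < b` in different blocks with only uncovered columns between
them: pivoting consecutive path edges of a spare row slides a vertex seeing the row of `a`
from `a` towards `b`, and a final pivot at `b` (odd distance; if `a` and `b` are flipped, a
first pivot between two other spare rows removes that flip) or against a spare vertex in a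
column that distinguishes `a` from `b` (even distance) equalises the rows of `a` and `b`. -/

theorem xor_false_right {a : Prop} : Xor a False ↔ a := by
  simp [xor_def]

theorem xor_assoc_iff {a b c : Prop} : Xor (Xor a b) c ↔ Xor a (Xor b c) := by
  simp only [xor_def]
  tauto

section Pivot

variable {V : Type*} {G : SimpleGraph V}

theorem sdFlip_adj {p : V → V → Prop} {x y : V} :
    (sdFlip G p).Adj x y ↔ x ≠ y ∧ Xor (G.Adj x y) (p x y ∨ p y x) :=
  Iff.rfl

/-- Pivoting `uv` toggles `xy` exactly when the symplectic form of the traces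
`(x ~ u, x ~ v)` and `(y ~ u, y ~ v)` is nonzero. -/
theorem pivot_adj {u v x y : V} (huv : G.Adj u v) (hxu : x ≠ u) (hxv : x ≠ v)
    (hyu : y ≠ u) (hyv : y ≠ v) :
    (pivot G u v).Adj x y ↔
      x ≠ y ∧ Xor (G.Adj x y) (Xor (G.Adj u x ∧ G.Adj v y) (G.Adj v x ∧ G.Adj u y)) := by
  have hvu := huv.symm
  have hne := G.ne_of_adj huv
  simp only [pivot, localComp, sdFlip_adj]
  by_cases G.Adj x y <;> by_cases G.Adj u x <;> by_cases G.Adj v x <;>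
    by_cases G.Adj u y <;> by_cases G.Adj v y <;>
    simp_all [xor_def, eq_comm]

theorem pivotSeq_append (G : SimpleGraph V) (l₁ l₂ : List (V × V)) :
    pivotSeq G (l₁ ++ l₂) = pivotSeq (pivotSeq G l₁) l₂ := by
  induction l₁ generalizing G with
  | nil => rfl
  | cons e l ih => exact ih _

theorem ValidPivots.append {l₁ l₂ : List (V × V)} (h₁ : ValidPivots G l₁)
    (h₂ : ValidPivots (pivotSeq G l₁) l₂) : ValidPivots G (l₁ ++ l₂) := by
  induction l₁ generalizing G with
  | nil => exact h₂
  | cons e l ih => exact ⟨h₁.1, ih h₁.2 h₂⟩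

def AdjEqOn (G H : SimpleGraph V) (K : Set V) : Prop :=
  ∀ x ∈ K, ∀ y ∈ K, (G.Adj x y ↔ H.Adj x y)

theorem AdjEqOn.mono {H : SimpleGraph V} {K K' : Set V} (h : AdjEqOn G H K) (hK : K' ⊆ K) :
    AdjEqOn G H K' :=
  fun x hx y hy => h x (hK hx) y (hK hy)

end Pivot

section PivotRel

variable {α : Type*} {f : α → α → Prop} {g h : α → Prop}

/-- The relation between columns after pivoting an edge whose ends see the column `j`
through `g j` and `h j`. -/
def pivotRel (f : α → α → Prop) (g h : α → Prop) (a b : α) : Prop :=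
  Xor (f a b) (Xor (g a ∧ h b) (h a ∧ g b))

instance [Std.Symm f] : Std.Symm (pivotRel f g h) where
  symm a b hab := by
    simp only [pivotRel, xor_def] at hab ⊢
    rw [comm (r := f)]
    tauto

theorem pivotRel_self {a : α} : pivotRel f g h a a ↔ f a a := by
  simp [pivotRel, and_comm, xor_def]

variable [Std.Symm f] {a b d : α}

theorem not_pivotRel_of_not_rel_self (hab : f a b) (ha : ¬ f a a) (l : α) :
    ¬ pivotRel f (f a) (f b) a l := by
  simp [pivotRel, comm (r := f) (a := b) (b := a), hab, ha, xor_def]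

theorem pivotRel_iff_of_not_rel (ha : f a a) (hb : f b b) (hab : ¬ f a b) (l : α) :
    pivotRel f (f a) (f b) a l ↔ pivotRel f (f a) (f b) b l := by
  simp only [pivotRel, comm (r := f) (a := b) (b := a), hab, ha, hb, xor_def]
  tauto

theorem pivotRel_xor_iff (ha : f a a) (hb : f b b) (hd : ¬ (f a d ↔ f b d)) (l : α) :
    pivotRel f (fun j => Xor (f b j) (f a j)) (f d) a l ↔
      pivotRel f (fun j => Xor (f b j) (f a j)) (f d) b l := by
  simp only [pivotRel, comm (r := f) (a := b) (b := a), comm (r := f) (a := d) (b := a),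
    comm (r := f) (a := d) (b := b), ha, hb]
  by_cases f a b <;> by_cases f a d <;> by_cases f b d <;> simp_all [xor_def] <;> tauto

theorem not_pivotRel_of_rel {e : α} (ha : f a a) (hb : f b b) (hab : f a b)
    (hd : ¬ (f a d ↔ f b d)) (he : e = a ∨ e = b) (hde : f d e) :
    ¬ pivotRel f (f d) (f e) a b := by
  have hba : f b a := symm hab
  rw [pivotRel, comm (r := f) (a := d) (b := a), comm (r := f) (a := d) (b := b)]
  rcases he with rfl | rfl <;> simp_all [xor_def, comm (r := f) (a := d)]

end PivotRel

section ColumnFlip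

variable {M n : ℕ} {f : Fin n → Fin n → Prop}

theorem pathsGraph_adj {x y : Fin M × Fin n} :
    (pathsGraph M n).Adj x y ↔ x.1 = y.1 ∧ (x.2.val + 1 = y.2.val ∨ y.2.val + 1 = x.2.val) :=
  and_congr_right' pathGraph_adj

def colFlip (M : ℕ) (f : Fin n → Fin n → Prop) : SimpleGraph (Fin M × Fin n) :=
  sdFlip (pathsGraph M n) fun x y => f x.2 y.2

variable [Std.Symm f]

theorem colFlip_adj {x y : Fin M × Fin n} :
    (colFlip M f).Adj x y ↔ x ≠ y ∧ Xor ((pathsGraph M n).Adj x y) (f x.2 y.2) := by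
  rw [colFlip, sdFlip_adj, or_iff_left_of_imp (symm (r := f))]

theorem colFlip_adj_of_fst_ne {x y : Fin M × Fin n} (h : x.1 ≠ y.1) :
    (colFlip M f).Adj x y ↔ f x.2 y.2 := by
  have hxy : x ≠ y := fun e => h (congrArg Prod.fst e)
  simp [colFlip_adj, pathsGraph_adj, h, hxy]

theorem AdjEqOn.pivot_colFlip {G : SimpleGraph (Fin M × Fin n)} {K : Set (Fin M × Fin n)}
    {g h : Fin n → Prop} {u v : Fin M × Fin n} (hG : AdjEqOn G (colFlip M f) K)
    (huv : G.Adj u v) (hu : u ∉ K) (hv : v ∉ K) (hg : ∀ x ∈ K, G.Adj u x ↔ g x.2)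
    (hh : ∀ x ∈ K, G.Adj v x ↔ h x.2) :
    AdjEqOn (pivot G u v) (colFlip M (pivotRel f g h)) K := by
  intro x hx y hy
  rw [pivot_adj huv (ne_of_mem_of_not_mem hx hu) (ne_of_mem_of_not_mem hx hv)
    (ne_of_mem_of_not_mem hy hu) (ne_of_mem_of_not_mem hy hv), hG x hx y hy, colFlip_adj,
    colFlip_adj, hg x hx, hh y hy, hh x hx, hg y hy, pivotRel]
  refine and_congr_right fun hxy => ?_
  simp only [hxy, ne_eq, not_false_eq_true, true_and]
  exact xor_assoc_iff

theorem AdjEqOn.pivot_colFlip_of_fst_ne {G : SimpleGraph (Fin M × Fin n)}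
    {K K₀ : Set (Fin M × Fin n)} (hG : AdjEqOn G (colFlip M f) K) {u v : Fin M × Fin n}
    (hu : u ∈ K) (hv : v ∈ K) (huv : u.1 ≠ v.1) (hf : f u.2 v.2) (hK₀ : K₀ ⊆ K)
    (hK₀uv : ∀ x ∈ K₀, x.1 ≠ u.1 ∧ x.1 ≠ v.1) :
    G.Adj u v ∧ AdjEqOn (pivot G u v) (colFlip M (pivotRel f (f u.2) (f v.2))) K₀ := by
  have hadj : G.Adj u v := (hG u hu v hv).2 ((colFlip_adj_of_fst_ne huv).2 hf)
  refine ⟨hadj, (hG.mono hK₀).pivot_colFlip hadj (fun h => (hK₀uv u h).1 rfl)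
    (fun h => (hK₀uv v h).2 rfl) (fun x hx => ?_) (fun x hx => ?_)⟩
  · rw [hG u hu x (hK₀ hx), colFlip_adj_of_fst_ne (hK₀uv x hx).1.symm]
  · rw [hG v hv x (hK₀ hx), colFlip_adj_of_fst_ne (hK₀uv x hx).2.symm]

end ColumnFlip

section Slide

variable {M n : ℕ} {f : Fin n → Fin n → Prop} [Std.Symm f] {G : SimpleGraph (Fin M × Fin n)}
  {K K₀ : Set (Fin M × Fin n)} {r : Fin M} {s t : Fin n}

def beyond (K : Set (Fin M × Fin n)) (r : Fin M) (t : Fin n) : Set (Fin M × Fin n) :=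
  {x | x ∈ K ∧ (x.1 ≠ r ∨ t < x.2)}

theorem beyond_subset : beyond K r t ⊆ K := fun _ hx => hx.1

theorem beyond_anti (h : s ≤ t) : beyond K r t ⊆ beyond K r s :=
  fun _ ⟨hx, hx'⟩ => ⟨hx, hx'.imp_right h.trans_lt⟩

theorem ne_of_mem_beyond {x : Fin M × Fin n} (hx : x ∈ beyond K r t) (h : s ≤ t) :
    x ≠ (r, s) := by
  rintro rfl
  exact hx.2.elim (· rfl) h.not_gt

theorem not_pathsGraph_adj_of_mem_beyond {x : Fin M × Fin n} (hx : x ∈ beyond K r t)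
    (h : s.val + 1 ≤ t.val) : ¬ (pathsGraph M n).Adj (r, s) x := by
  rw [pathsGraph_adj]
  rintro ⟨hr, hs⟩
  rcases hx.2 with hx | hx
  · exact hx hr.symm
  · dsimp only at hs
    omega

/-- The invariant of sliding the head `(r, t)` rightwards along row `r`. -/
def SlideState (G : SimpleGraph (Fin M × Fin n)) (f : Fin n → Fin n → Prop)
    (K : Set (Fin M × Fin n)) (r : Fin M) (t : Fin n) (g : Fin n → Prop) : Prop :=
  AdjEqOn G (colFlip M f) (beyond K r t) ∧
    ∀ x ∈ beyond K r t, (G.Adj (r, t) x ↔ Xor ((pathsGraph M n).Adj (r, t) x) (g x.2))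

theorem SlideState.of_adjEqOn (hG : AdjEqOn G (colFlip M f) K) (ht : (r, t) ∈ K) :
    SlideState G f K r t (f t) := by
  refine ⟨hG.mono beyond_subset, fun x hx => ?_⟩
  rw [hG _ ht x hx.1, colFlip_adj]
  exact and_iff_right (ne_of_mem_beyond hx le_rfl).symm

/-- Pivoting the head with its right neighbour, a vertex of a column that `f` does not flip,
moves the head two steps right; the new head inherits the old head's flips. -/
theorem SlideState.step {t₁ t₂ : Fin n} {g : Fin n → Prop} (hs : SlideState G f K r t g)
    (h₁ : t₁.val = t.val + 1) (h₂ : t₂.val = t.val + 2) (hK₁ : (r, t₁) ∈ K) (hK₂ : (r, t₂) ∈ K)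
    (hnull : ∀ l, ¬ f t₁ l) (hg : ¬ g t₁) :
    G.Adj (r, t) (r, t₁) ∧
      SlideState (pivot G (r, t) (r, t₁)) f K r t₂ fun j => Xor (f t₂ j) (g j) := by
  obtain ⟨hG, hhead⟩ := hs
  have hb₁ : (r, t₁) ∈ beyond K r t := ⟨hK₁, Or.inr (show t < t₁ by omega)⟩
  have hb₂ : (r, t₂) ∈ beyond K r t := ⟨hK₂, Or.inr (show t < t₂ by omega)⟩
  have hsub : beyond K r t₂ ⊆ beyond K r t := beyond_anti (by omega)
  have hne : ∀ x ∈ beyond K r t₂, x ≠ (r, t) ∧ x ≠ (r, t₁) := fun x hx =>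
    ⟨ne_of_mem_beyond hx (by omega), ne_of_mem_beyond hx (by omega)⟩
  have hw : (r, t₂) ≠ (r, t) ∧ (r, t₂) ≠ (r, t₁) := by
    simp only [ne_eq, Prod.mk.injEq, true_and]
    omega
  have huv : G.Adj (r, t) (r, t₁) := by
    rw [hhead _ hb₁, pathsGraph_adj]
    simp [h₁, hg]
  have hvw : G.Adj (r, t₁) (r, t₂) := by
    rw [hG _ hb₁ _ hb₂, colFlip_adj, pathsGraph_adj]
    exact ⟨hw.2.symm, Or.inl ⟨⟨rfl, Or.inl (by dsimp only; omega)⟩, hnull _⟩⟩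
  have hv : ∀ x ∈ beyond K r t₂, ¬ G.Adj (r, t₁) x := by
    intro x hx
    rw [hG _ hb₁ x (hsub hx), colFlip_adj]
    simp [not_pathsGraph_adj_of_mem_beyond hx (by omega : t₁.val + 1 ≤ t₂.val), hnull]
  have hu : ∀ x ∈ beyond K r t₂, G.Adj (r, t) x ↔ g x.2 := by
    intro x hx
    rw [hhead x (hsub hx)]
    simp [not_pathsGraph_adj_of_mem_beyond hx (by omega : t.val + 1 ≤ t₂.val)]
  refine ⟨huv, fun x hx y hy => ?_, fun x hx => ?_⟩
  · rw [pivot_adj huv (hne x hx).1 (hne x hx).2 (hne y hy).1 (hne y hy).2,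
      hG x (hsub hx) y (hsub hy)]
    simp only [hv x hx, hv y hy, false_and, and_false, _root_.xor_self, xor_false_right]
    exact and_iff_right_of_imp (colFlip M f).ne_of_adj
  · rw [pivot_adj huv hw.1 hw.2 (hne x hx).1 (hne x hx).2, hG _ hb₂ x (hsub hx), colFlip_adj,
      hu x hx]
    simp only [hv x hx, hvw, and_false, true_and, xor_false, id,
      (ne_of_mem_beyond hx le_rfl).symm, ne_eq, not_false_eq_true]
    exact xor_assoc_iff

theorem exists_slideState (hG : AdjEqOn G (colFlip M f) K) (hrow : ∀ j, (r, j) ∈ K) {a : Fin n}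
    (k : ℕ) (ht : t.val = a.val + 2 * k) (hnull : ∀ j, a < j → j ≤ t → ∀ l, ¬ f j l) :
    ∃ l, ValidPivots G l ∧ SlideState (pivotSeq G l) f K r t (f a) := by
  induction k generalizing t with
  | zero =>
    obtain rfl : t = a := by omega
    exact ⟨[], trivial, .of_adjEqOn hG (hrow t)⟩
  | succ k ih =>
    obtain ⟨t₀, ht₀⟩ : ∃ t₀ : Fin n, t₀.val = a.val + 2 * k := ⟨⟨_, by omega⟩, rfl⟩
    obtain ⟨t₁, ht₁⟩ : ∃ t₁ : Fin n, t₁.val = t₀.val + 1 := ⟨⟨_, by omega⟩, rfl⟩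
    have hnull₁ : ∀ l, ¬ f t₁ l := hnull t₁ (by omega) (by omega)
    obtain ⟨l, hl, hs⟩ := ih ht₀ fun j h₁ h₂ => hnull j h₁ (by omega)
    obtain ⟨hadj, hs'⟩ :=
      hs.step (t₂ := t) ht₁ (by omega) (hrow _) (hrow _) hnull₁ fun h => hnull₁ a (symm h)
    have hg : (fun j => Xor (f t j) (f a j)) = f a :=
      funext fun j => by simp [hnull t (by omega) le_rfl j]
    refine ⟨l ++ [((r, t₀), (r, t₁))], hl.append ⟨hadj, trivial⟩, ?_⟩
    rwa [pivotSeq_append, ← hg]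

theorem SlideState.pivot_head {g : Fin n → Prop} {v : Fin M × Fin n}
    (hs : SlideState G f K r t g) (hv : v ∈ beyond K r t) (hadj : G.Adj (r, t) v)
    (hK₀ : K₀ ⊆ beyond K r t) (hK₀r : ∀ x ∈ K₀, x.1 ≠ r ∧ x.1 ≠ v.1) :
    AdjEqOn (pivot G (r, t) v) (colFlip M (pivotRel f g (f v.2))) K₀ :=
  (hs.1.mono hK₀).pivot_colFlip hadj (fun h => (hK₀r _ h).1 rfl) (fun h => (hK₀r _ h).2 rfl)
    (fun x hx => by
      rw [hs.2 x (hK₀ hx), pathsGraph_adj]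
      simp [(hK₀r x hx).1.symm])
    (fun x hx => by rw [hs.1 v hv x (hK₀ hx), colFlip_adj_of_fst_ne (hK₀r x hx).2.symm])

variable {a b : Fin n}

theorem exists_pivots_of_odd_gap (hG : AdjEqOn G (colFlip M f) K) (hrow : ∀ j, (r, j) ∈ K)
    (hK₀ : K₀ ⊆ K) (hK₀r : ∀ x ∈ K₀, x.1 ≠ r) (hab : a < b) (hodd : Odd (b.val - a.val))
    (hnull : ∀ j, a < j → j < b → ∀ l, ¬ f j l) (hfab : ¬ f a b) :
    ∃ l, ValidPivots G l ∧ AdjEqOn (pivotSeq G l) (colFlip M (pivotRel f (f a) (f b))) K₀ := by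
  obtain ⟨k, hk⟩ := hodd
  obtain ⟨t, ht⟩ : ∃ t : Fin n, t.val = a.val + 2 * k := ⟨⟨_, by omega⟩, rfl⟩
  obtain ⟨l, hl, hst⟩ := exists_slideState hG hrow k ht fun j h₁ h₂ => hnull j h₁ (by omega)
  have hb : (r, b) ∈ beyond K r t := ⟨hrow b, Or.inr (show t < b by omega)⟩
  have hadj : (pivotSeq G l).Adj (r, t) (r, b) := by
    rw [hst.2 _ hb, pathsGraph_adj]
    exact Or.inl ⟨⟨rfl, Or.inl (by dsimp only; omega)⟩, hfab⟩
  refine ⟨l ++ [((r, t), (r, b))], hl.append ⟨hadj, trivial⟩, ?_⟩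
  rw [pivotSeq_append]
  exact hst.pivot_head hb hadj (fun x hx => ⟨hK₀ hx, Or.inl (hK₀r x hx)⟩)
    fun x hx => ⟨hK₀r x hx, hK₀r x hx⟩

theorem exists_pivots_of_even_gap (hG : AdjEqOn G (colFlip M f) K) (hrow : ∀ j, (r, j) ∈ K)
    (hK₀ : K₀ ⊆ K) (hK₀r : ∀ x ∈ K₀, x.1 ≠ r) {w : Fin M × Fin n} (hw : w ∈ K) (hwr : w.1 ≠ r)
    (hK₀w : ∀ x ∈ K₀, x.1 ≠ w.1) (hab : a < b) (heven : Even (b.val - a.val))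
    (hnull : ∀ j, a < j → j < b → ∀ l, ¬ f j l) (hfw : ¬ (f a w.2 ↔ f b w.2)) :
    ∃ l, ValidPivots G l ∧ AdjEqOn (pivotSeq G l)
      (colFlip M (pivotRel f (fun j => Xor (f b j) (f a j)) (f w.2))) K₀ := by
  obtain ⟨k, hk⟩ := heven
  obtain ⟨t, ht⟩ : ∃ t : Fin n, t.val = a.val + 2 * (k - 1) := ⟨⟨_, by omega⟩, rfl⟩
  obtain ⟨t₁, ht₁⟩ : ∃ t₁ : Fin n, t₁.val = t.val + 1 := ⟨⟨_, by omega⟩, rfl⟩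
  have hnull₁ : ∀ l, ¬ f t₁ l := hnull t₁ (by omega) (by omega)
  obtain ⟨l, hl, hst⟩ := exists_slideState hG hrow (k - 1) ht fun j h₁ h₂ => hnull j h₁ (by omega)
  obtain ⟨hadj, hst'⟩ :=
    hst.step (t₂ := b) ht₁ (by omega) (hrow _) (hrow _) hnull₁ fun h => hnull₁ a (symm h)
  have hwb : w ∈ beyond K r b := ⟨hw, Or.inl hwr⟩
  have hadj' : (pivot (pivotSeq G l) (r, t) (r, t₁)).Adj (r, b) w := by
    rw [hst'.2 w hwb, pathsGraph_adj]
    simp only [hwr.symm, false_and, xor_iff_not_iff]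
    tauto
  refine ⟨l ++ [((r, t), (r, t₁)), ((r, b), w)], hl.append ⟨hadj, hadj', trivial⟩, ?_⟩
  rw [pivotSeq_append]
  exact hst'.pivot_head hwb hadj' (fun x hx => ⟨hK₀ hx, Or.inl (hK₀r x hx)⟩)
    fun x hx => ⟨hK₀r x hx, hK₀w x hx⟩

end Slide

section BlockRel

variable {α : Type*} {Q : Set (Set α)} {f : α → α → Prop} {g h : α → Prop}

def IsBlockFun (Q : Set (Set α)) (g : α → Prop) : Prop :=
  (∀ a, g a → a ∈ ⋃₀ Q) ∧ ∀ c ∈ Q, ∀ a ∈ c, ∀ b ∈ c, (g a ↔ g b)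

/-- The relations `(Q(a), Q(b)) ∈ F` for symmetric `F ⊆ Q²`, described intrinsically. -/
structure IsBlockRel (Q : Set (Set α)) (f : α → α → Prop) : Prop extends Std.Symm f where
  row : ∀ a, IsBlockFun Q (f a)

theorem IsBlockFun.xor (hg : IsBlockFun Q g) (hh : IsBlockFun Q h) :
    IsBlockFun Q fun a => Xor (g a) (h a) :=
  ⟨fun a ha => ha.or.elim (hg.1 a) (hh.1 a), fun c hc a ha b hb => by
    simp only [hg.2 c hc a ha b hb, hh.2 c hc a ha b hb]⟩

theorem IsBlockFun.const_and (p : Prop) (hh : IsBlockFun Q h) : IsBlockFun Q fun a => p ∧ h a :=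
  ⟨fun a ha => hh.1 a ha.2, fun c hc a ha b hb => and_congr_right' (hh.2 c hc a ha b hb)⟩

theorem IsBlockRel.pivotRel (hf : IsBlockRel Q f) (hg : IsBlockFun Q g) (hh : IsBlockFun Q h) :
    IsBlockRel Q (pivotRel f g h) :=
  have := hf.toSymm
  ⟨inferInstance, fun a => (hf.row a).xor ((hh.const_and _).xor (hg.const_and _))⟩

theorem IsBlockRel.not_rel (hf : IsBlockRel Q f) {a : α} (ha : a ∉ ⋃₀ Q) (b : α) : ¬ f a b :=
  fun hab => ha ((hf.row b).1 a (hf.symm a b hab))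

theorem IsBlockRel.rel_congr_left (hf : IsBlockRel Q f) {c : Set α} (hc : c ∈ Q) {a a' : α}
    (ha : a ∈ c) (ha' : a' ∈ c) (b : α) : f a b ↔ f a' b := by
  have := hf.toSymm
  rw [comm (r := f), (hf.row b).2 c hc a ha a' ha', comm (r := f)]

def HasRedundantBlock (Q : Set (Set α)) (f : α → α → Prop) : Prop :=
  (∃ c ∈ Q, ∃ a ∈ c, ∀ b, ¬ f a b) ∨
    ∃ c ∈ Q, ∃ c' ∈ Q, c ≠ c' ∧ ∃ a ∈ c, ∃ a' ∈ c', ∀ b, (f a b ↔ f a' b)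

theorem IsBlockRel.diff_singleton (hf : IsBlockRel Q f) {c : Set α} (hc : c ∈ Q) {a : α}
    (ha : a ∈ c) (hnull : ∀ b, ¬ f a b) : IsBlockRel (Q \ {c}) f where
  toSymm := hf.toSymm
  row b := by
    refine ⟨fun x hx => ?_, fun d hd => (hf.row b).2 d hd.1⟩
    obtain ⟨d, hd, hxd⟩ := (hf.row b).1 x hx
    refine ⟨d, ⟨hd, fun hdc => hnull b ?_⟩, hxd⟩
    rw [Set.mem_singleton_iff] at hdc
    subst hdc
    exact (hf.rel_congr_left hd hxd ha b).1 (hf.symm b x hx)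

theorem IsBlockRel.merge (hf : IsBlockRel Q f) {c c' : Set α} (hc : c ∈ Q) (hc' : c' ∈ Q)
    {a a' : α} (ha : a ∈ c) (ha' : a' ∈ c') (haa' : ∀ b, (f a b ↔ f a' b)) :
    IsBlockRel (insert (c ∪ c') (Q \ {c, c'})) f where
  toSymm := hf.toSymm
  row b := by
    have := hf.toSymm
    have hrow : ∀ x ∈ c ∪ c', (f b x ↔ f b a) := by
      rintro x (hx | hx)
      · exact (hf.row b).2 c hc x hx a ha
      · rw [(hf.row b).2 c' hc' x hx a' ha', comm (r := f), ← haa', comm (r := f)]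
    refine ⟨fun x hx => ?_, ?_⟩
    · obtain ⟨d, hd, hxd⟩ := (hf.row b).1 x hx
      by_cases hdc : d = c ∨ d = c'
      · exact ⟨c ∪ c', Set.mem_insert _ _, by rcases hdc with rfl | rfl <;> simp [hxd]⟩
      · exact ⟨d, Set.mem_insert_of_mem _ ⟨hd, by simpa using hdc⟩, hxd⟩
    · rintro d (rfl | ⟨hd, -⟩) x hx y hy
      · rw [hrow x hx, hrow y hy]
      · exact (hf.row b).2 d hd x hx y hy

theorem IsDisjNonemptyColl.merge (hQ : IsDisjNonemptyColl Q) {c c' : Set α} (hc : c ∈ Q)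
    (hc' : c' ∈ Q) : IsDisjNonemptyColl (insert (c ∪ c') (Q \ {c, c'})) := by
  refine ⟨?_, (hQ.2.subset Set.sdiff_subset).insert fun d hd _ => ?_⟩
  · rintro d (rfl | hd)
    · exact (hQ.1 c hc).mono Set.subset_union_left
    · exact hQ.1 d hd.1
  · have hdc : d ≠ c ∧ d ≠ c' := by simpa using hd.2
    exact Disjoint.union_left (hQ.2 hc hd.1 (Ne.symm hdc.1)) (hQ.2 hc' hd.1 (Ne.symm hdc.2))

theorem ncard_merge_lt {c c' : Set α} (hQ : Q.Finite) (hc : c ∈ Q) (hc' : c' ∈ Q) (hcc' : c ≠ c') :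
    (insert (c ∪ c') (Q \ {c, c'})).ncard < Q.ncard := by
  have hsub : {c, c'} ⊆ Q := Set.insert_subset hc (Set.singleton_subset_iff.2 hc')
  have := Set.ncard_insert_le (c ∪ c') (Q \ {c, c'})
  have := Set.ncard_sdiff hsub (hQ.subset hsub)
  have := Set.ncard_le_ncard hsub hQ
  rw [Set.ncard_pair hcc'] at *
  omega

theorem IsBlockRel.exists_ncard_lt (hQ : IsDisjNonemptyColl Q) (hfin : Q.Finite)
    (hf : IsBlockRel Q f) (hred : HasRedundantBlock Q f) :
    ∃ Q', IsDisjNonemptyColl Q' ∧ Q'.ncard < Q.ncard ∧ IsBlockRel Q' f := by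
  rcases hred with ⟨c, hc, a, ha, hnull⟩ | ⟨c, hc, c', hc', hcc', a, ha, a', ha', haa'⟩
  · exact ⟨Q \ {c}, ⟨fun d hd => hQ.1 d hd.1, hQ.2.subset Set.sdiff_subset⟩,
      Set.ncard_sdiff_singleton_lt_of_mem hc hfin, hf.diff_singleton hc ha hnull⟩
  · exact ⟨_, hQ.merge hc hc', ncard_merge_lt hfin hc hc' hcc', hf.merge hc hc' ha ha' haa'⟩

end BlockRel

section Translation

variable {V : Type*}

theorem mem_blockOf_self (P : Set (Set V)) (x : V) : x ∈ blockOf P x := by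
  unfold blockOf
  split_ifs with h
  · exact h.choose_spec.2
  · rfl

theorem blockOf_eq_of_mem {P : Set (Set V)} (hP : P.PairwiseDisjoint id) {X : Set V} (hX : X ∈ P)
    {x : V} (hx : x ∈ X) : blockOf P x = X := by
  have h : ∃ X ∈ P, x ∈ X := ⟨X, hX, hx⟩
  rw [blockOf, dif_pos h]
  exact hP.elim_set h.choose_spec.1 hX x h.choose_spec.2 hx

theorem collFlip_eq_sdFlip (H : SimpleGraph V) {P : Set (Set V)} (hP : P.PairwiseDisjoint id)
    {F : Set (Set V × Set V)} (hF : F ⊆ P ×ˢ P) :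
    collFlip H P F = sdFlip H fun x y => ∃ p ∈ F, x ∈ p.1 ∧ y ∈ p.2 := by
  unfold collFlip
  congr
  funext x y
  refine propext ⟨fun h => ⟨_, h, mem_blockOf_self P x, mem_blockOf_self P y⟩, ?_⟩
  rintro ⟨p, hp, hx, hy⟩
  rwa [blockOf_eq_of_mem hP (hF hp).1 hx, blockOf_eq_of_mem hP (hF hp).2 hy]

variable {M n : ℕ} {P : Set (Set (Fin M × Fin n))}

theorem IsCoarsening.snd_mem_image_iff (hP : IsCoarsening P (columnSet M n))
    {X : Set (Fin M × Fin n)} (hX : X ∈ P) {x : Fin M × Fin n} : x.2 ∈ Prod.snd '' X ↔ x ∈ X := by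
  refine ⟨?_, fun hx => ⟨x, hx, rfl⟩⟩
  rintro ⟨y, hy, hyx⟩
  obtain ⟨C, hC, rfl⟩ := hP.2 X hX
  obtain ⟨c, hc, hyc⟩ := hy
  obtain ⟨j, rfl⟩ := hC hc
  exact ⟨column M n j, hc, hyx.symm.trans hyc⟩

theorem IsCoarsening.eq_of_mem_image_snd (hP : IsCoarsening P (columnSet M n))
    {X Y : Set (Fin M × Fin n)} (hX : X ∈ P) (hY : Y ∈ P) {j : Fin n}
    (hjX : j ∈ Prod.snd '' X) (hjY : j ∈ Prod.snd '' Y) : X = Y := by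
  obtain ⟨x, hx, rfl⟩ := hjX
  exact hP.1.2.elim_set hX hY x hx ((hP.snd_mem_image_iff hY).1 hjY)

theorem IsCoarsening.isDisjNonemptyColl_image (hP : IsCoarsening P (columnSet M n)) :
    IsDisjNonemptyColl (Set.image Prod.snd '' P) := by
  refine ⟨?_, ?_⟩
  · rintro _ ⟨X, hX, rfl⟩
    exact (hP.1.1 X hX).image _
  · rintro _ ⟨X, hX, rfl⟩ _ ⟨Y, hY, rfl⟩ hne
    exact Set.disjoint_left.2 fun j h₁ h₂ => hne (by rw [hP.eq_of_mem_image_snd hX hY h₁ h₂])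

theorem IsCoarsening.ncard_image (hP : IsCoarsening P (columnSet M n)) :
    (Set.image Prod.snd '' P).ncard = P.ncard :=
  Set.InjOn.ncard_image fun X hX Y hY h => by
    obtain ⟨x, hx⟩ := hP.1.1 X hX
    exact hP.eq_of_mem_image_snd hX hY ⟨x, hx, rfl⟩ (h ▸ ⟨x, hx, rfl⟩)

def colRel (F : Set (Set (Fin M × Fin n) × Set (Fin M × Fin n))) (j l : Fin n) : Prop :=
  ∃ p ∈ F, j ∈ Prod.snd '' p.1 ∧ l ∈ Prod.snd '' p.2

variable {F : Set (Set (Fin M × Fin n) × Set (Fin M × Fin n))}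

theorem IsCoarsening.collFlip_eq_colFlip (hP : IsCoarsening P (columnSet M n))
    (hF : F ⊆ P ×ˢ P) : collFlip (pathsGraph M n) P F = colFlip M (colRel F) := by
  rw [collFlip_eq_sdFlip _ hP.1.2 hF, colFlip]
  congr
  funext x y
  refine propext (exists_congr fun p => and_congr_right fun hp => ?_)
  rw [hP.snd_mem_image_iff (hF hp).1, hP.snd_mem_image_iff (hF hp).2]

theorem IsCoarsening.isBlockRel_colRel (hP : IsCoarsening P (columnSet M n)) (hF : F ⊆ P ×ˢ P)
    (hFs : SymmRelSet F) : IsBlockRel (Set.image Prod.snd '' P) (colRel F) where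
  symm := by
    rintro j l ⟨p, hp, hj, hl⟩
    exact ⟨(p.2, p.1), hFs _ _ hp, hl, hj⟩
  row j := by
    refine ⟨fun l ⟨p, hp, _, hl⟩ => ⟨_, ⟨p.2, (hF hp).2, rfl⟩, hl⟩, ?_⟩
    rintro _ ⟨Y, hY, rfl⟩
    suffices ∀ l ∈ Prod.snd '' Y, ∀ l' ∈ Prod.snd '' Y, colRel F j l → colRel F j l' from
      fun l hl l' hl' => ⟨this l hl l' hl', this l' hl' l hl⟩
    rintro l hl l' hl' ⟨p, hp, hj, hlp⟩
    exact ⟨p, hp, hj, hP.eq_of_mem_image_snd (hF hp).2 hY hlp hl ▸ hl'⟩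

end Translation

section FlippedPaths

variable {m n : ℕ} {Q : Set (Set (Fin n))} {f : Fin n → Fin n → Prop}

theorem isCoarsening_image_preimage_snd (hm : 0 < m) (hQ : IsDisjNonemptyColl Q) :
    IsCoarsening (Set.preimage Prod.snd '' Q) (columnSet m n) := by
  refine ⟨⟨?_, ?_⟩, ?_⟩
  · rintro _ ⟨c, hc, rfl⟩
    obtain ⟨j, hj⟩ := hQ.1 c hc
    exact ⟨(⟨0, hm⟩, j), hj⟩
  · rintro _ ⟨c, hc, rfl⟩ _ ⟨d, hd, rfl⟩ hne
    exact (hQ.2 hc hd fun h => hne (h ▸ rfl)).preimage _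
  · rintro _ ⟨c, hc, rfl⟩
    refine ⟨column m n '' c, Set.image_subset_range _ _, ?_⟩
    ext x
    simp [column]

theorem IsBlockRel.colFlip_eq_collFlip (hQ : Q.PairwiseDisjoint id) (hf : IsBlockRel Q f) :
    colFlip m f = collFlip (pathsGraph m n) (Set.preimage Prod.snd '' Q)
      (Prod.map (Set.preimage Prod.snd) (Set.preimage Prod.snd) ''
        {p ∈ Q ×ˢ Q | ∃ a ∈ p.1, ∃ b ∈ p.2, f a b}) := by
  have := hf.toSymm
  have hQ' : (Set.preimage Prod.snd '' Q : Set (Set (Fin m × Fin n))).PairwiseDisjoint id := by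
    rintro _ ⟨c, hc, rfl⟩ _ ⟨d, hd, rfl⟩ hne
    exact (hQ hc hd fun h => hne (h ▸ rfl)).preimage _
  rw [collFlip_eq_sdFlip _ hQ', colFlip]
  · congr
    funext x y
    refine propext ⟨fun h => ?_, ?_⟩
    · obtain ⟨c, hc, hx⟩ := (hf.row y.2).1 x.2 (symm h)
      obtain ⟨c', hc', hy⟩ := (hf.row x.2).1 y.2 h
      exact ⟨_, ⟨(c, c'), ⟨⟨hc, hc'⟩, x.2, hx, y.2, hy, h⟩, rfl⟩, hx, hy⟩
    · rintro ⟨_, ⟨⟨c, c'⟩, ⟨⟨hc, hc'⟩, a, ha, b, hb, hab⟩, rfl⟩, hx, hy⟩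
      rw [hf.rel_congr_left hc hx ha, (hf.row a).2 c' hc' _ hy b hb]
      exact hab
  · rintro _ ⟨⟨c, c'⟩, ⟨⟨hc, hc'⟩, -⟩, rfl⟩
    exact ⟨⟨c, hc, rfl⟩, ⟨c', hc', rfl⟩⟩

theorem IsBlockRel.isKFlippedPaths {k : ℕ} (hm : 0 < m) (hQ : IsDisjNonemptyColl Q)
    (hQk : Q.ncard ≤ k) (hf : IsBlockRel Q f) : IsKFlippedPaths k m n (colFlip m f) := by
  refine ⟨_, _, isCoarsening_image_preimage_snd hm hQ,
    (Set.ncard_image_le (Set.toFinite Q)).trans hQk, ?_, ?_, hf.colFlip_eq_collFlip hQ.2⟩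
  · rintro _ ⟨⟨c, c'⟩, ⟨⟨hc, hc'⟩, -⟩, rfl⟩
    exact ⟨⟨c, hc, rfl⟩, ⟨c', hc', rfl⟩⟩
  · rintro _ _ ⟨⟨c, c'⟩, ⟨⟨hc, hc'⟩, a, ha, b, hb, hab⟩, he⟩
    simp only [Prod.map_apply, Prod.mk.injEq] at he
    obtain ⟨rfl, rfl⟩ := he
    exact ⟨(c', c), ⟨⟨hc', hc⟩, b, hb, a, ha, hf.symm a b hab⟩, rfl⟩

theorem AdjEqOn.nonempty_iso_induce {M : ℕ} (h : m ≤ M) {G : SimpleGraph (Fin M × Fin n)}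
    (hG : AdjEqOn G (colFlip M f) {x | x.1.val < m}) :
    Nonempty (colFlip m f ≃g G.induce {x | x.1.val < m}) := by
  let e : Fin m × Fin n ≃ {x : Fin M × Fin n // x.1.val < m} :=
    { toFun := fun p => ⟨(Fin.castLE h p.1, p.2), p.1.isLt⟩
      invFun := fun x => (⟨x.1.1, x.2⟩, x.1.2)
      left_inv := fun _ => rfl
      right_inv := fun _ => rfl }
  refine ⟨⟨e, fun {p q} => ?_⟩⟩
  rw [induce_adj, hG _ (e p).2 _ (e q).2]
  simp [e, colFlip, sdFlip_adj, pathsGraph_adj, Prod.ext_iff, Fin.ext_iff]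

end FlippedPaths

section Reduction

variable {M n m : ℕ} {Q : Set (Set (Fin n))} {f : Fin n → Fin n → Prop} {a b : Fin n}

def IsGap (Q : Set (Set (Fin n))) (a b : Fin n) : Prop :=
  a < b ∧ (∃ c ∈ Q, ∃ c' ∈ Q, c ≠ c' ∧ a ∈ c ∧ b ∈ c') ∧ ∀ j, a < j → j < b → j ∉ ⋃₀ Q

theorem exists_isGap_of_lt {c c' : Set (Fin n)} (hc : c ∈ Q) (hc' : c' ∈ Q) (hcc' : c ≠ c')
    (ha : a ∈ c) (hb : b ∈ c') (hab : a < b) : ∃ a b, IsGap Q a b := by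
  induction h : b.val - a.val using Nat.strong_induction_on generalizing a b c c' with
  | _ d ih =>
  by_cases hgap : ∀ j, a < j → j < b → j ∉ ⋃₀ Q
  · exact ⟨a, b, hab, ⟨c, hc, c', hc', hcc', ha, hb⟩, hgap⟩
  push Not at hgap
  obtain ⟨j, haj, hjb, e, he, hje⟩ := hgap
  by_cases hec : e = c
  · subst hec
    exact ih (b.val - j.val) (by omega) he hc' hcc' hje hb hjb rfl
  · exact ih (j.val - a.val) (by omega) hc he (Ne.symm hec) ha hje haj rfl

theorem exists_isGap (hQ : IsDisjNonemptyColl Q) (h : 1 < Q.ncard) : ∃ a b, IsGap Q a b := by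
  obtain ⟨c, hc, c', hc', hcc'⟩ := (Set.one_lt_ncard (Set.toFinite Q)).1 h
  obtain ⟨a, ha⟩ := hQ.1 c hc
  obtain ⟨b, hb⟩ := hQ.1 c' hc'
  have hab : a ≠ b := fun e => Set.disjoint_left.1 (hQ.2 hc hc' hcc') ha (e ▸ hb)
  rcases hab.lt_or_gt with h | h
  · exact exists_isGap_of_lt hc hc' hcc' ha hb h
  · exact exists_isGap_of_lt hc' hc hcc'.symm hb ha h

theorem IsGap.hasRedundantBlock (h : IsGap Q a b) (hab : ∀ l, (f a l ↔ f b l)) :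
    HasRedundantBlock Q f :=
  have ⟨c, hc, c', hc', hcc', ha, hb⟩ := h.2.1
  Or.inr ⟨c, hc, c', hc', hcc', a, ha, b, hb, hab⟩

theorem IsGap.not_rel (h : IsGap Q a b) (hf : IsBlockRel Q f) (j : Fin n) (haj : a < j)
    (hjb : j < b) (l : Fin n) : ¬ f j l :=
  hf.not_rel (h.2.2 j haj hjb) l

def PivotReducible (G : SimpleGraph (Fin M × Fin n)) (m : ℕ) (Q : Set (Set (Fin n))) : Prop :=
  ∃ l f₂, ValidPivots G l ∧ AdjEqOn (pivotSeq G l) (colFlip M f₂) {x | x.1.val < m} ∧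
    IsBlockRel Q f₂ ∧ HasRedundantBlock Q f₂

theorem PivotReducible.of_pivot {G : SimpleGraph (Fin M × Fin n)} {u v : Fin M × Fin n}
    (huv : G.Adj u v) (h : PivotReducible (pivot G u v) m Q) : PivotReducible G m Q :=
  have ⟨l, f₂, hl, hG, hf₂, hred⟩ := h
  ⟨(u, v) :: l, f₂, ⟨huv, hl⟩, hG, hf₂, hred⟩

theorem pivotReducible_of_not_rel_self (hM : m + 2 ≤ M) (hf : IsBlockRel Q f) (hab : f a b)
    (ha : ¬ f a a) : PivotReducible (colFlip M f) m Q := by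
  have := hf.toSymm
  obtain ⟨c, hc, hac⟩ := (hf.row b).1 a (symm hab)
  let u : Fin M × Fin n := (⟨m, by omega⟩, a)
  let v : Fin M × Fin n := (⟨m + 1, by omega⟩, b)
  obtain ⟨huv, hG⟩ := AdjEqOn.pivot_colFlip_of_fst_ne (G := colFlip M f) (fun _ _ _ _ => Iff.rfl)
    (Set.mem_univ u) (Set.mem_univ v) (by simp [u, v, Fin.ext_iff]) hab
    (Set.subset_univ {x : Fin M × Fin n | x.1.val < m})
    fun x (hx : x.1.val < m) => ⟨by simp [u, Fin.ext_iff]; omega, by simp [v, Fin.ext_iff]; omega⟩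
  exact ⟨[(u, v)], _, ⟨huv, trivial⟩, hG, hf.pivotRel (hf.row a) (hf.row b),
    Or.inl ⟨c, hc, a, hac, not_pivotRel_of_not_rel_self hab ha⟩⟩

theorem pivotReducible_of_odd_gap (hM : m < M) {G : SimpleGraph (Fin M × Fin n)}
    {K : Set (Fin M × Fin n)} (hG : AdjEqOn G (colFlip M f) K)
    (hK : ∀ x : Fin M × Fin n, x.1.val ≤ m → x ∈ K) (hf : IsBlockRel Q f) (hgap : IsGap Q a b)
    (hodd : Odd (b.val - a.val)) (ha : f a a) (hb : f b b) (hab : ¬ f a b) :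
    PivotReducible G m Q := by
  have := hf.toSymm
  obtain ⟨l, hl, hG'⟩ := exists_pivots_of_odd_gap (r := ⟨m, hM⟩) (K₀ := {x | x.1.val < m}) hG
    (fun _ => hK _ le_rfl) (fun x hx => hK x hx.le) (fun x hx => Fin.ne_of_val_ne hx.ne)
    hgap.1 hodd (hgap.not_rel hf) hab
  exact ⟨l, _, hl, hG', hf.pivotRel (hf.row a) (hf.row b),
    hgap.hasRedundantBlock (pivotRel_iff_of_not_rel ha hb hab)⟩

theorem pivotReducible_of_even_gap (hM : m + 2 ≤ M) (hf : IsBlockRel Q f) (hgap : IsGap Q a b)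
    (heven : Even (b.val - a.val)) (ha : f a a) (hb : f b b) {d : Fin n}
    (hd : ¬ (f a d ↔ f b d)) : PivotReducible (colFlip M f) m Q := by
  have := hf.toSymm
  obtain ⟨l, hl, hG⟩ := exists_pivots_of_even_gap (G := colFlip M f) (r := ⟨m, by omega⟩)
    (K₀ := {x | x.1.val < m}) (w := (⟨m + 1, by omega⟩, d)) (fun _ _ _ _ => Iff.rfl)
    (fun _ => Set.mem_univ _) (Set.subset_univ _) (fun x hx => Fin.ne_of_val_ne hx.ne)
    (Set.mem_univ _) (by simp [Fin.ext_iff])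
    (fun x (hx : x.1.val < m) => by simp [Fin.ext_iff]; omega)
    hgap.1 heven (hgap.not_rel hf) hd
  exact ⟨l, _, hl, hG, hf.pivotRel ((hf.row b).xor (hf.row a)) (hf.row d),
    hgap.hasRedundantBlock (pivotRel_xor_iff ha hb hd)⟩

theorem pivotReducible_of_odd_gap_of_rel (hM : m + 3 ≤ M) (hf : IsBlockRel Q f)
    (hgap : IsGap Q a b) (hodd : Odd (b.val - a.val)) (ha : f a a) (hb : f b b) (hab : f a b)
    {d : Fin n} (hd : ¬ (f a d ↔ f b d)) : PivotReducible (colFlip M f) m Q := by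
  have := hf.toSymm
  obtain ⟨e, he, hde⟩ : ∃ e, (e = a ∨ e = b) ∧ f d e := by
    by_cases hda : f d a
    · exact ⟨a, Or.inl rfl, hda⟩
    · refine ⟨b, Or.inr rfl, ?_⟩
      rw [comm (r := f)] at hda ⊢
      tauto
  let u : Fin M × Fin n := (⟨m + 1, by omega⟩, d)
  let v : Fin M × Fin n := (⟨m + 2, by omega⟩, e)
  obtain ⟨huv, hG⟩ := AdjEqOn.pivot_colFlip_of_fst_ne (G := colFlip M f) (fun _ _ _ _ => Iff.rfl)
    (Set.mem_univ u) (Set.mem_univ v) (by simp [u, v, Fin.ext_iff]) hde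
    (Set.subset_univ {x : Fin M × Fin n | x.1.val ≤ m})
    fun x (hx : x.1.val ≤ m) => ⟨by simp [u, Fin.ext_iff]; omega, by simp [v, Fin.ext_iff]; omega⟩
  exact .of_pivot huv (pivotReducible_of_odd_gap (by omega) hG (fun _ => id)
    (hf.pivotRel (hf.row d) (hf.row e)) hgap hodd (pivotRel_self.2 ha) (pivotRel_self.2 hb)
    (not_pivotRel_of_rel ha hb hab hd he hde))

theorem pivotReducible (hM : m + 3 ≤ M) (hQ : IsDisjNonemptyColl Q) (hQ₁ : 1 < Q.ncard)
    (hf : IsBlockRel Q f) : PivotReducible (colFlip M f) m Q := by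
  by_cases hred : HasRedundantBlock Q f
  · exact ⟨[], f, trivial, fun _ _ _ _ => Iff.rfl, hf, hred⟩
  by_cases hdiag : ∃ a b, f a b ∧ ¬ f a a
  · obtain ⟨a, b, hab, ha⟩ := hdiag
    exact pivotReducible_of_not_rel_self (by omega) hf hab ha
  push Not at hdiag
  have hself : ∀ c ∈ Q, ∀ a ∈ c, f a a := fun c hc a ha => by
    by_contra h
    exact hred (Or.inl ⟨c, hc, a, ha, fun b hab => h (hdiag a b hab)⟩)
  obtain ⟨a, b, hgap⟩ := exists_isGap hQ hQ₁
  obtain ⟨c, hc, c', hc', -, hac, hbc'⟩ := hgap.2.1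
  have ha := hself c hc a hac
  have hb := hself c' hc' b hbc'
  obtain ⟨d, hd⟩ : ∃ d, ¬ (f a d ↔ f b d) := by
    by_contra h
    push Not at h
    exact hred (hgap.hasRedundantBlock h)
  rcases Nat.even_or_odd (b.val - a.val) with heven | hodd
  · exact pivotReducible_of_even_gap (by omega) hf hgap heven ha hb hd
  by_cases hab : f a b
  · exact pivotReducible_of_odd_gap_of_rel hM hf hgap hodd ha hb hab hd
  · exact pivotReducible_of_odd_gap (by omega) (fun _ _ _ _ => Iff.rfl) (fun _ _ => Set.mem_univ _)
      hf hgap hodd ha hb hab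

end Reduction

theorem stmt12_general (m n : ℕ) (hm : 1 ≤ m) (k : ℕ) (hk : 2 ≤ k)
    (P : Set (Set (Fin (m + 4) × Fin n))) (hP : IsCoarsening P (columnSet (m + 4) n))
    (hPk : P.ncard = k)
    (F : Set (Set (Fin (m + 4) × Fin n) × Set (Fin (m + 4) × Fin n)))
    (hFP : F ⊆ P ×ˢ P) (hFsymm : SymmRelSet F) :
    ∃ G' : SimpleGraph (Fin m × Fin n), IsKFlippedPaths (k - 1) m n G' ∧
      IsPivotMinorOf G' (collFlip (pathsGraph (m + 4) n) P F) := by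
  have hQ := hP.isDisjNonemptyColl_image
  rw [hP.collFlip_eq_colFlip hFP]
  obtain ⟨l, f₂, hl, hG, hf₂, hred⟩ := pivotReducible (M := m + 4) (m := m) (by omega) hQ
    (by rw [hP.ncard_image]; omega) (hP.isBlockRel_colRel hFP hFsymm)
  obtain ⟨Q₂, hQ₂, hlt, hf₂'⟩ := hf₂.exists_ncard_lt hQ (Set.toFinite _) hred
  rw [hP.ncard_image] at hlt
  exact ⟨colFlip m f₂, hf₂'.isKFlippedPaths hm hQ₂ (by omega), l, _, hl,
    hG.nonempty_iso_induce (by omega)⟩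

theorem stmt12 (m n : ℕ) (hm : 1 ≤ m) (hn : 1 ≤ n) (k : ℕ) (hk : 2 ≤ k)
    (P : Set (Set (Fin (m + 4) × Fin n))) (hP : IsCoarsening P (columnSet (m + 4) n))
    (hPk : P.ncard = k)
    (F : Set (Set (Fin (m + 4) × Fin n) × Set (Fin (m + 4) × Fin n)))
    (hFP : F ⊆ P ×ˢ P) (hFsymm : SymmRelSet F) :
    ∃ G' : SimpleGraph (Fin m × Fin n), IsKFlippedPaths (k - 1) m n G' ∧
      IsPivotMinorOf G' (collFlip (pathsGraph (m + 4) n) P F) :=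
  stmt12_general m n hm k hk P hP hPk F hFP hFsymm
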